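/- arXiv:1211.2681 — 2 statements merged into one kernel-verified Lean document; each statement's English description precedes it below -/
import Mathlib

section
/- For n ≥ 2, let B_n be the banana graph consisting of two vertices joined by n distinct edges. Then the minimal degree of a finite harmonic morphism from B_n itself to a tree is n, whereas the stable gonality satisfies sgon(B_n) = 2. -/
/-!  Finite multigraphs, harmonic morphisms, refinements and stable gonality,
     following Cornelissen–Kato–Kool, "A combinatorial Li–Yau inequality and
     rational points on curves".  -/

attribute [local instance] Classical.propDecidable

noncomputable section

/-- A finite multigraph: a finite vertex type, a finite edge type, and for each
edge its two (possibly equal) endpoints. -/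
structure MGraph where
  V : Type
  E : Type
  [vFin : Fintype V]
  [eFin : Fintype E]
  fst : E → V
  snd : E → V

attribute [instance] MGraph.vFin MGraph.eFin

namespace MGraph

variable (G : MGraph)

/-- The edge `e` is incident to the vertex `v`. -/
def Inc (e : G.E) (v : G.V) : Prop := G.fst e = v ∨ G.snd e = v

/-- The edge `e` joins the vertices `x` and `y` (unordered). -/
def Joins (e : G.E) (x y : G.V) : Prop :=
  (G.fst e = x ∧ G.snd e = y) ∨ (G.fst e = y ∧ G.snd e = x)

/-- Two vertices are adjacent if some edge joins them. -/
def Adj (x y : G.V) : Prop := ∃ e, G.Joins e x y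

/-- A multigraph is connected if it is nonempty and any two vertices are joined
by a walk. -/
def Connected : Prop := Nonempty G.V ∧ ∀ x y : G.V, Relation.ReflTransGen G.Adj x y

/-- No loops. -/
def Loopless : Prop := ∀ e : G.E, G.fst e ≠ G.snd e

/-- A simple graph: no loops and no multiple edges. -/
def Simple : Prop :=
  G.Loopless ∧ ∀ e e' : G.E, G.Joins e' (G.fst e) (G.snd e) → e = e'

/-- A tree is a connected graph of genus `|E| - |V| + 1 = 0`. -/
def IsTree : Prop := G.Connected ∧ Fintype.card G.V = Fintype.card G.E + 1

/-- The degree of a vertex (loops count twice). -/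
def degree (v : G.V) : ℕ :=
  (Finset.univ.filter fun e => G.fst e = v).card +
    (Finset.univ.filter fun e => G.snd e = v).card

/-- The maximal vertex degree `Δ_G`. -/
def maxDegree : ℕ := Finset.univ.sup G.degree

/-- The volume `vol(G) = Σ_v deg v = 2 |E|`. -/
def vol : ℕ := ∑ v, G.degree v

/-- The number of edges joining `x` and `y`. -/
def numEdges (x y : G.V) : ℕ := (Finset.univ.filter fun e => G.Joins e x y).card

/-- The Laplacian matrix `L_G = D_G - A_G`. -/
def lapMatrix : Matrix G.V G.V ℝ := fun x y =>
  (if x = y then (G.degree x : ℝ) else 0) - (G.numEdges x y : ℝ)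

/-- `lam` is the smallest nonzero eigenvalue `λ_G` of the Laplacian of `G`. -/
def IsFirstLapEigenvalue (lam : ℝ) : Prop :=
  IsLeast {μ : ℝ | μ ≠ 0 ∧ ∃ f : G.V → ℝ, f ≠ 0 ∧ G.lapMatrix.mulVec f = μ • f} lam

/-- The normalized Laplacian `D^{-1/2} L D^{-1/2}`. -/
def normLapMatrix : Matrix G.V G.V ℝ := fun x y =>
  G.lapMatrix x y / (Real.sqrt (G.degree x) * Real.sqrt (G.degree y))

/-- `lam` is the smallest nonzero eigenvalue of the normalized Laplacian of `G`. -/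
def IsFirstNormLapEigenvalue (lam : ℝ) : Prop :=
  IsLeast {μ : ℝ | μ ≠ 0 ∧ ∃ f : G.V → ℝ, f ≠ 0 ∧ G.normLapMatrix.mulVec f = μ • f} lam

/-- Reachability by walks staying inside the vertex set `S`. -/
def ReachIn (S : Set G.V) (x y : G.V) : Prop :=
  Relation.ReflTransGen (fun a b => a ∈ S ∧ b ∈ S ∧ G.Adj a b) x y

/-- Reachability by walks not using the edge `e₀`. -/
def ReachAvoidEdge (e₀ : G.E) (x y : G.V) : Prop :=
  Relation.ReflTransGen (fun a b => ∃ e, e ≠ e₀ ∧ G.Joins e a b) x y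

/-- The connected component of `G - e` containing the vertex `v`. -/
def edgeSide (e : G.E) (v : G.V) : Set G.V := {y | G.ReachAvoidEdge e v y}

/-- The connected component of `G - x` containing the vertex `y`. -/
def vertexSide (x y : G.V) : Set G.V := {z | G.ReachIn {v | v ≠ x} y z}

end MGraph

/-- The mass `ν(S)` of a set of vertices. -/
def mass {V : Type} [Fintype V] (ν : V → ℝ) (S : Set V) : ℝ :=
  ∑ v ∈ Finset.univ.filter (fun v => v ∈ S), ν v

/-- A probability measure on a finite vertex set. -/
def IsProbMeasure {V : Type} [Fintype V] (ν : V → ℝ) : Prop :=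
  (∀ v, 0 ≤ ν v) ∧ ∑ v, ν v = 1

namespace MGraph

/-- The size of an edge `e` of a measured tree `(T, ν)`:
`min(ν(T₁(e)), ν(T₂(e)))`. -/
def edgeSize (G : MGraph) (ν : G.V → ℝ) (e : G.E) : ℝ :=
  min (mass ν (G.edgeSide e (G.fst e))) (mass ν (G.edgeSide e (G.snd e)))

/-- `(T, ν)` is `c`-thick: for every vertex `x`, `T - x` has a connected
component of measure at least `c`. -/
def Thick (G : MGraph) (ν : G.V → ℝ) (c : ℝ) : Prop :=
  ∀ x : G.V, ∃ y : G.V, y ≠ x ∧ c ≤ mass ν (G.vertexSide x y)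

/-- Subdivision of the edge `e₀`: a new vertex in the middle of `e₀`,
and `e₀` replaced by two new edges. -/
def subdivide (G : MGraph) (e₀ : G.E) : MGraph where
  V := G.V ⊕ Unit
  E := {e : G.E // e ≠ e₀} ⊕ Bool
  vFin := inferInstance
  eFin := inferInstance
  fst := fun e => match e with
    | Sum.inl e1 => Sum.inl (G.fst e1.1)
    | Sum.inr false => Sum.inl (G.fst e₀)
    | Sum.inr true => Sum.inr ()
  snd := fun e => match e with
    | Sum.inl e1 => Sum.inl (G.snd e1.1)
    | Sum.inr false => Sum.inr ()
    | Sum.inr true => Sum.inl (G.snd e₀)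

/-- Addition of a leaf at the vertex `v₀`: one new vertex, joined to `v₀` by
one new edge. -/
def addLeaf (G : MGraph) (v₀ : G.V) : MGraph where
  V := G.V ⊕ Unit
  E := G.E ⊕ Unit
  vFin := inferInstance
  eFin := inferInstance
  fst := Sum.elim (fun e => Sum.inl (G.fst e)) (fun _ => Sum.inl v₀)
  snd := Sum.elim (fun e => Sum.inl (G.snd e)) (fun _ => Sum.inr ())

/-- An isomorphism of multigraphs. -/
structure Iso (G H : MGraph) where
  eV : G.V ≃ H.V
  eE : G.E ≃ H.E
  ends : ∀ e, H.Joins (eE e) (eV (G.fst e)) (eV (G.snd e))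

/-- `Refines G G' ι p` means: `G'` is a refinement of `G` (obtained from `G`
by finitely many subdivisions of edges and additions of leaves, up to
isomorphism).  The map `ι` identifies the vertices of `G` inside `G'` and the
"provenance" map `p` records, for every edge of `G'`, the edge of `G` it lies
over (`none` for edges of added leaf-trees). -/
inductive Refines : ∀ (G G' : MGraph), (G.V → G'.V) → (G'.E → Option G.E) → Prop
  | refl (G : MGraph) : Refines G G id (fun e => some e)
  | subdiv {G G' : MGraph} {ι : G.V → G'.V} {p : G'.E → Option G.E}
      (h : Refines G G' ι p) (e₀ : G'.E) :
      Refines G (subdivide G' e₀) (fun v => Sum.inl (ι v))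
        (fun e => Sum.elim (fun e1 : {e : G'.E // e ≠ e₀} => p e1.1) (fun _ : Bool => p e₀) e)
  | leaf {G G' : MGraph} {ι : G.V → G'.V} {p : G'.E → Option G.E}
      (h : Refines G G' ι p) (v₀ : G'.V) :
      Refines G (addLeaf G' v₀) (fun v => Sum.inl (ι v))
        (fun e => Sum.elim (fun e1 : G'.E => p e1) (fun _ : Unit => none) e)
  | iso {G G' : MGraph} {ι : G.V → G'.V} {p : G'.E → Option G.E}
      (h : Refines G G' ι p) {G'' : MGraph} (φ : Iso G' G'') :
      Refines G G'' (fun v => φ.eV (ι v)) (fun e => p (φ.eE.symm e))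

/-- `Subdivides G G' ι`: `G'` is obtained from `G` by subdividing edges only
(no leaves added), up to isomorphism. -/
inductive Subdivides : ∀ (G G' : MGraph), (G.V → G'.V) → Prop
  | refl (G : MGraph) : Subdivides G G id
  | subdiv {G G' : MGraph} {ι : G.V → G'.V}
      (h : Subdivides G G' ι) (e₀ : G'.E) :
      Subdivides G (subdivide G' e₀) (fun v => Sum.inl (ι v))
  | iso {G G' : MGraph} {ι : G.V → G'.V}
      (h : Subdivides G G' ι) {G'' : MGraph} (φ : Iso G' G'') :
      Subdivides G G'' (fun v => φ.eV (ι v))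

/-- A finite harmonic (indexed) morphism of multigraphs: vertices map to
vertices, edges to edges (compatibly with endpoints), each edge `e` carries a
positive index `r e`, and around each vertex `v` the sums
`Σ_{e ∋ v, fE e = e'} r e` have a common value `m v > 0` for all edges `e'`
incident to the image of `v`. -/
structure FinHarm (G T : MGraph) where
  fV : G.V → T.V
  fE : G.E → T.E
  r : G.E → ℕ
  r_pos : ∀ e, 0 < r e
  ends : ∀ e, T.Joins (fE e) (fV (G.fst e)) (fV (G.snd e))
  m : G.V → ℕ
  m_pos : ∀ v, 0 < m v
  harm : ∀ v : G.V, ∀ e' : T.E, T.Inc e' (fV v) →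
    m v = ∑ e ∈ Finset.univ.filter (fun e => G.Inc e v ∧ fE e = e'), r e

/-- `φ` has degree `d`: over every vertex the `m`'s sum to `d` and over every
edge the indices sum to `d`. -/
def FinHarm.IsDegree {G T : MGraph} (φ : FinHarm G T) (d : ℕ) : Prop :=
  (∀ v' : T.V, ∑ v ∈ Finset.univ.filter (fun v => φ.fV v = v'), φ.m v = d) ∧
  (∀ e' : T.E, ∑ e ∈ Finset.univ.filter (fun e => φ.fE e = e'), φ.r e = d)

/-- The set of degrees of finite harmonic morphisms from refinements of `G` to
trees; the stable gonality `sgon(G)` is the least element of this set. -/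
def sgonSet (G : MGraph) : Set ℕ :=
  {d | ∃ (G' T : MGraph) (ι : G.V → G'.V) (p : G'.E → Option G.E),
        Refines G G' ι p ∧ G'.Loopless ∧ T.IsTree ∧
        ∃ φ : FinHarm G' T, φ.IsDegree d}

/-- `|φ⁻¹(S) ∩ V(G)|` for `S ⊆ V(T)`, `G'` a refinement of `G` via `ι`,
and `φ : G' → T`. -/
def pushCount {G G' T : MGraph} (ι : G.V → G'.V) (φ : FinHarm G' T) (S : Set T.V) : ℕ :=
  (Finset.univ.filter (fun v : G.V => φ.fV (ι v) ∈ S)).card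

/-- The pushforward measure `φ_* μ_G (S) = |φ⁻¹(S) ∩ V(G)| / |G|`. -/
def pushMeasure {G G' T : MGraph} (ι : G.V → G'.V) (φ : FinHarm G' T) (S : Set T.V) : ℝ :=
  (pushCount ι φ S : ℝ) / (Fintype.card G.V : ℝ)

/-- The size of an edge `e` of `T` with respect to the pushforward measure
`φ_* μ_G`. -/
def pushEdgeSize {G G' T : MGraph} (ι : G.V → G'.V) (φ : FinHarm G' T) (e : T.E) : ℝ :=
  min (pushMeasure ι φ (T.edgeSide e (T.fst e))) (pushMeasure ι φ (T.edgeSide e (T.snd e)))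

/-- The measured tree `(T, φ_* μ_G)` is `c`-thick. -/
def PushThick {G G' T : MGraph} (ι : G.V → G'.V) (φ : FinHarm G' T) (c : ℝ) : Prop :=
  ∀ x : T.V, ∃ y : T.V, y ≠ x ∧ c ≤ pushMeasure ι φ (T.vertexSide x y)

end MGraph

open MGraph

namespace MGraph

/-- The banana graph `B_n`: two vertices joined by `n` distinct edges. -/
def banana (n : ℕ) : MGraph where
  V := Bool
  E := Fin n
  fst := fun _ => false
  snd := fun _ => true

end MGraph

section Aux

open MGraph

/-- Walks of a given length. -/
inductive StepN {α : Type} (r : α → α → Prop) (a : α) : ℕ → α → Prop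
  | refl : StepN r a 0 a
  | tail {n b c} : StepN r a n b → r b c → StepN r a (n + 1) c

theorem rtg_stepN {α : Type} {r : α → α → Prop} {a b : α}
    (h : Relation.ReflTransGen r a b) : ∃ n, StepN r a n b := by
  induction h with
  | refl => exact ⟨0, .refl⟩
  | tail _ hbc ih => obtain ⟨n, hn⟩ := ih; exact ⟨n + 1, .tail hn hbc⟩

theorem joins_symm {G : MGraph} {e : G.E} {x y : G.V} (h : G.Joins e x y) : G.Joins e y x :=
  h.elim (fun h => Or.inr h) (fun h => Or.inl h)

theorem connected_card_le (G : MGraph) (h : G.Connected) :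
    Fintype.card G.V ≤ Fintype.card G.E + 1 := by
  obtain ⟨⟨v0⟩, hconn⟩ := h
  have hex : ∀ v, ∃ n, StepN G.Adj v0 n v := fun v => rtg_stepN (hconn v0 v)
  set d : G.V → ℕ := fun v => Nat.find (hex v) with hd
  have hstep : ∀ v, v ≠ v0 → ∃ e u, G.Joins e u v ∧ d u + 1 ≤ d v := by
    intro v hv
    have hspec : StepN G.Adj v0 (d v) v := Nat.find_spec (hex v)
    generalize hN : d v = N at hspec
    rcases hspec with _ | @⟨m, u, _, hsteps, hadj⟩
    · exact absurd rfl hv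
    · obtain ⟨e, hj⟩ := hadj
      have hu : d u ≤ m := Nat.find_le hsteps
      exact ⟨e, u, hj, by omega⟩
  choose fe fu hj hdlt using hstep
  have hinj : Function.Injective (fun v : {v : G.V // v ≠ v0} => fe v.1 v.2) := by
    rintro ⟨v, hv⟩ ⟨w, hw⟩ hfvw
    have hfvw' : fe v hv = fe w hw := hfvw
    by_contra hne
    have hvw : v ≠ w := fun h => hne (by simpa using h)
    have h1 := hj v hv
    have h2 := hj w hw
    rw [hfvw'] at h1
    have d1 := hdlt v hv
    have d2 := hdlt w hw
    rcases h1 with ⟨ha, hb⟩ | ⟨ha, hb⟩ <;> rcases h2 with ⟨hc, hd⟩ | ⟨hc, hd⟩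
    · exact hvw (hb.symm.trans hd)
    · have h3 : fu v hv = w := ha.symm.trans hc
      have h4 : v = fu w hw := hb.symm.trans hd
      rw [h3] at d1; rw [← h4] at d2; omega
    · have h3 : v = fu w hw := ha.symm.trans hc
      have h4 : fu v hv = w := hb.symm.trans hd
      rw [h4] at d1; rw [← h3] at d2; omega
    · exact hvw (ha.symm.trans hc)
  have hcard : Fintype.card {v : G.V // v ≠ v0} ≤ Fintype.card G.E :=
    Fintype.card_le_of_injective _ hinj
  have h1 : Fintype.card {v : G.V // v ≠ v0} = Fintype.card G.V - 1 := by
    rw [Fintype.card_subtype_compl, Fintype.card_subtype_eq]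
  have : 0 < Fintype.card G.V := Fintype.card_pos_iff.mpr ⟨v0⟩
  omega

end Aux
section Aux2
open MGraph

/-- The graph obtained by deleting one edge. -/
def MGraph.delEdge (G : MGraph) (e₀ : G.E) : MGraph where
  V := G.V
  E := {e : G.E // e ≠ e₀}
  fst := fun e => G.fst e.1
  snd := fun e => G.snd e.1

theorem delEdge_connected {G : MGraph} (e₀ : G.E) (hc : G.Connected)
    (h : ∀ x y, G.Joins e₀ x y → Relation.ReflTransGen (G.delEdge e₀).Adj x y) :
    (G.delEdge e₀).Connected := by
  refine ⟨hc.1, fun x y => ?_⟩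
  have := hc.2 x y
  induction this with
  | refl => exact .refl
  | tail _ hbc ih =>
    refine ih.trans ?_
    obtain ⟨e, hj⟩ := hbc
    by_cases he : e = e₀
    · exact h _ _ (he ▸ hj)
    · exact Relation.ReflTransGen.single ⟨⟨e, he⟩, hj⟩

theorem tree_simple {T : MGraph} (h : T.IsTree) : T.Simple := by
  obtain ⟨hc, hcard⟩ := h
  have key : ∀ e₀ : T.E, ¬ (∀ x y, T.Joins e₀ x y →
      Relation.ReflTransGen (T.delEdge e₀).Adj x y) := by
    intro e₀ hpath
    have hconn := delEdge_connected e₀ hc hpath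
    have := connected_card_le _ hconn
    have hE : Fintype.card (T.delEdge e₀).E = Fintype.card T.E - 1 := by
      show Fintype.card {e : T.E // e ≠ e₀} = _
      rw [Fintype.card_subtype_compl, Fintype.card_subtype_eq]
    have hV : Fintype.card (T.delEdge e₀).V = Fintype.card T.V := rfl
    have : 0 < Fintype.card T.E := Fintype.card_pos_iff.mpr ⟨e₀⟩
    omega
  constructor
  · intro e he
    refine key e (fun x y hj => ?_)
    rcases hj with ⟨h1, h2⟩ | ⟨h1, h2⟩ <;>
      · have : x = y := by rw [← h1, ← h2, he]
        exact this ▸ Relation.ReflTransGen.refl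
  · intro e e' hj
    by_contra hne
    refine key e (fun x y hxy => ?_)
    have hj' : T.Joins e' x y := by
      rcases hxy with ⟨h1, h2⟩ | ⟨h1, h2⟩
      · rw [← h1, ← h2]; exact hj
      · rw [← h1, ← h2]; exact joins_symm hj
    exact Relation.ReflTransGen.single ⟨⟨e', Ne.symm hne⟩, hj'⟩

end Aux2
section Aux3
open MGraph

/-- The single-edge tree. -/
def edgeT : MGraph where
  V := Bool
  E := Unit
  fst := fun _ => false
  snd := fun _ => true

theorem edgeT_isTree : edgeT.IsTree := by
  constructor
  · refine ⟨⟨false⟩, fun x y => ?_⟩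
    have hadj : edgeT.Adj false true := ⟨(), Or.inl ⟨rfl, rfl⟩⟩
    have hadj' : edgeT.Adj true false := ⟨(), Or.inr ⟨rfl, rfl⟩⟩
    cases x <;> cases y
    · exact .refl
    · exact .single hadj
    · exact .single hadj'
    · exact .refl
  · show Fintype.card Bool = Fintype.card Unit + 1; simp

def bananaHarm (n : ℕ) (hn : 0 < n) : FinHarm (banana n) edgeT where
  fV := id
  fE := fun _ => ()
  r := fun _ => 1
  r_pos := fun _ => one_pos
  ends := fun _ => Or.inl ⟨rfl, rfl⟩
  m := fun _ => n
  m_pos := fun _ => hn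
  harm := by
    intro v e' _
    rw [Finset.sum_filter]
    obtain ⟨⟩ := e'
    cases v <;> simp [MGraph.Inc, banana] <;> exact (Finset.card_fin n).symm.trans (Eq.symm (if_pos rfl))

theorem bananaHarm_deg (n : ℕ) (hn : 0 < n) : (bananaHarm n hn).IsDegree n := by
  constructor
  · intro v'
    rw [Finset.sum_filter]
    simp [bananaHarm]
    exact (Finset.sum_ite_eq' _ _ _).trans (if_pos (Finset.mem_univ _))
  · intro e'
    obtain ⟨⟩ := e'
    rw [Finset.sum_filter]
    simp [bananaHarm, banana]
    exact (Finset.sum_congr rfl (fun _ _ => if_pos rfl)).trans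
      ((Finset.card_eq_sum_ones _).symm.trans (Finset.card_fin n))

theorem banana_part1 (n : ℕ) (hn : 2 ≤ n) :
    IsLeast {d : ℕ | ∃ T : MGraph, T.IsTree ∧
      ∃ φ : FinHarm (banana n) T, φ.IsDegree d} n := by
  constructor
  · exact ⟨edgeT, edgeT_isTree, bananaHarm n (by omega), bananaHarm_deg n (by omega)⟩
  · rintro d ⟨T, hT, φ, hdeg⟩
    obtain ⟨hll, hsimp⟩ := tree_simple hT
    set e0 : Fin n := ⟨0, by omega⟩
    have hends : ∀ e : Fin n, T.Joins (φ.fE e) (φ.fV false) (φ.fV true) := φ.ends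
    have hfE : ∀ e : Fin n, φ.fE e = φ.fE e0 := by
      intro e
      refine hsimp (φ.fE e) (φ.fE e0) ?_
      rcases hends e with ⟨h1, h2⟩ | ⟨h1, h2⟩
      · rw [h1, h2]; exact hends e0
      · rw [h1, h2]; exact joins_symm (hends e0)
    have hsum := hdeg.2 (φ.fE e0)
    rw [Finset.filter_true_of_mem (fun (e : (banana n).E) (_ : e ∈ (Finset.univ : Finset (banana n).E)) => hfE e)] at hsum
    rw [← hsum]
    refine le_trans ?_ (Finset.sum_le_sum (fun e _ => φ.r_pos e))
    simp [banana]
    exact le_of_eq (Finset.card_fin n).symm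

end Aux3
section Aux4
open MGraph

theorem refines_card {G G' : MGraph} {ι : G.V → G'.V} {p : G'.E → Option G.E}
    (h : Refines G G' ι p) :
    Fintype.card G'.E + Fintype.card G.V = Fintype.card G'.V + Fintype.card G.E := by
  induction h with
  | refl => ring
  | @subdiv G' ι p h e₀ ih =>
    have hV : Fintype.card (subdivide G' e₀).V = Fintype.card G'.V + 1 := by
      show Fintype.card (G'.V ⊕ Unit) = _; simp
    have hE : Fintype.card (subdivide G' e₀).E = Fintype.card G'.E + 1 := by
      have h1 : Fintype.card {e : G'.E // e ≠ e₀} = Fintype.card G'.E - 1 := by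
        rw [Fintype.card_subtype_compl, Fintype.card_subtype_eq]
      have h2 : 0 < Fintype.card G'.E := Fintype.card_pos_iff.mpr ⟨e₀⟩
      show Fintype.card ({e : G'.E // e ≠ e₀} ⊕ Bool) = _; rw [Fintype.card_sum, h1, Fintype.card_bool]
      omega
    omega
  | @leaf G' ι p h v₀ ih =>
    have hV : Fintype.card (addLeaf G' v₀).V = Fintype.card G'.V + 1 := by
      show Fintype.card (G'.V ⊕ Unit) = _; simp
    have hE : Fintype.card (addLeaf G' v₀).E = Fintype.card G'.E + 1 := by
      show Fintype.card (G'.E ⊕ Unit) = _; simp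
    omega
  | @iso G' ι p h G'' φ ih =>
    rw [← Fintype.card_congr φ.eV, ← Fintype.card_congr φ.eE]
    exact ih

theorem sgon_lower (n : ℕ) (hn : 2 ≤ n) : ∀ d ∈ sgonSet (banana n), 2 ≤ d := by
  rintro d ⟨G', T, ι, p, href, hll, hT, φ, hdeg⟩
  by_contra hd
  interval_cases d
  · -- degree 0 impossible
    have h0 := hdeg.1 (φ.fV (ι false))
    have hmem : (ι false) ∈ Finset.univ.filter (fun v => φ.fV v = φ.fV (ι false)) := by
      simp
    have : 0 < ∑ v ∈ Finset.univ.filter (fun v => φ.fV v = φ.fV (ι false)), φ.m v :=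
      Finset.sum_pos' (fun v _ => Nat.zero_le _) ⟨ι false, hmem, φ.m_pos _⟩
    omega
  · -- degree 1 impossible
    -- every vertex fiber has exactly one element
    have hVfib : ∀ v' : T.V,
        (Finset.univ.filter (fun v => φ.fV v = v')).card = 1 := by
      intro v'
      have h1 := hdeg.1 v'
      rcases Finset.eq_empty_or_nonempty (Finset.univ.filter (fun v => φ.fV v = v')) with
        he | ⟨v, hv⟩
      · rw [he] at h1; simp at h1
      · have hle : (Finset.univ.filter (fun v => φ.fV v = v')).card ≤
            ∑ v ∈ Finset.univ.filter (fun v => φ.fV v = v'), φ.m v := by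
          calc _ = ∑ _v ∈ Finset.univ.filter (fun v => φ.fV v = v'), 1 := by simp
          _ ≤ _ := Finset.sum_le_sum fun v _ => φ.m_pos v
        have hpos : 0 < (Finset.univ.filter (fun v => φ.fV v = v')).card :=
          Finset.card_pos.mpr ⟨v, hv⟩
        omega
    have hEfib : ∀ e' : T.E,
        (Finset.univ.filter (fun e => φ.fE e = e')).card ≤ 1 := by
      intro e'
      have h1 := hdeg.2 e'
      have hle : (Finset.univ.filter (fun e => φ.fE e = e')).card ≤
          ∑ e ∈ Finset.univ.filter (fun e => φ.fE e = e'), φ.r e := by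
        calc _ = ∑ _e ∈ Finset.univ.filter (fun e => φ.fE e = e'), 1 := by simp
        _ ≤ _ := Finset.sum_le_sum fun e _ => φ.r_pos e
      omega
    have hcV : Fintype.card G'.V = Fintype.card T.V := by
      rw [← Finset.card_univ, ← Finset.card_univ,
        Finset.card_eq_sum_card_fiberwise (f := φ.fV)
          (t := Finset.univ) (fun v _ => Finset.mem_univ _)]
      simp only [hVfib]
      simp
    have hcE : Fintype.card G'.E ≤ Fintype.card T.E := by
      rw [← Finset.card_univ, ← Finset.card_univ,
        Finset.card_eq_sum_card_fiberwise (f := φ.fE)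
          (t := Finset.univ) (fun e _ => Finset.mem_univ _)]
      calc _ ≤ ∑ _e' : T.E, 1 := Finset.sum_le_sum fun e' _ => hEfib e'
      _ = _ := by simp
    have hg := refines_card href
    have hTcard := hT.2
    have hb1 : Fintype.card (banana n).V = 2 := by show Fintype.card Bool = 2; simp
    have hb2 : Fintype.card (banana n).E = n := by show Fintype.card (Fin n) = n; simp
    omega

end Aux4
section Aux5
open MGraph

/-- The banana graph with the first `k` edges subdivided once. -/
def Bsub (n k : ℕ) : MGraph where
  V := Bool ⊕ Fin k
  E := (Fin k × Bool) ⊕ {i : Fin n // k ≤ i.val}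
  fst := fun e => match e with
    | .inl (j, false) => .inl false
    | .inl (j, true) => .inr j
    | .inr _ => .inl false
  snd := fun e => match e with
    | .inl (j, false) => .inr j
    | .inl (_, true) => .inl true
    | .inr _ => .inl true

def bsubIso0 (n : ℕ) : Iso (banana n) (Bsub n 0) where
  eV := {
    toFun := Sum.inl
    invFun := Sum.elim id (fun j => absurd j.isLt (by omega))
    left_inv := fun b => rfl
    right_inv := by
      rintro (b | j)
      · rfl
      · exact absurd j.isLt (by omega) }
  eE := {
    toFun := fun i => Sum.inr ⟨i, Nat.zero_le _⟩
    invFun := Sum.elim (fun p => absurd p.1.isLt (by omega)) (fun i => i.1)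
    left_inv := fun i => rfl
    right_inv := by
      rintro (p | i)
      · exact absurd p.1.isLt (by omega)
      · exact congrArg Sum.inr (Subtype.ext rfl) }
  ends := fun e => Or.inl ⟨rfl, rfl⟩

def bsubIsoStep (n k : ℕ) (hk : k < n) :
    Iso (subdivide (Bsub n k) (Sum.inr ⟨⟨k, hk⟩, le_refl k⟩)) (Bsub n (k + 1)) where
  eV := {
    toFun := fun v => match v with
      | .inl (.inl b) => .inl b
      | .inl (.inr j) => .inr ⟨j.val, by omega⟩
      | .inr () => .inr ⟨k, by omega⟩
    invFun := fun v => match v with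
      | .inl b => .inl (.inl b)
      | .inr j => if h : j.val < k then .inl (.inr ⟨j.val, h⟩) else .inr ()
    left_inv := by
      rintro ((b | j) | ⟨⟩)
      · rfl
      · simp [j.isLt]; rfl
      · simp; rfl
    right_inv := by
      rintro (b | j)
      · rfl
      · by_cases h : j.val < k
        · simp [h]; rfl
        · have hjk : j.val = k := by omega
          simp only [dif_neg h]
          erw [dif_neg h]
          exact congrArg Sum.inr (Fin.ext hjk.symm : (⟨k, by omega⟩ : Fin (k+1)) = j) }
  eE := {
    toFun := fun e => match e with
      | .inl ⟨.inl (j, b), _⟩ => .inl (⟨j.val, by omega⟩, b)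
      | .inl ⟨.inr i, hne⟩ => .inr ⟨i.1, by
          have hik : i.1.val ≠ k := fun hik =>
            hne (congrArg Sum.inr (Subtype.ext (Fin.ext hik)))
          have := i.2
          omega⟩
      | .inr b => .inl (⟨k, by omega⟩, b)
    invFun := fun e => match e with
      | .inl (j, b) =>
          if h : j.val < k then .inl ⟨.inl (⟨j.val, h⟩, b), Sum.inl_ne_inr⟩ else .inr b
      | .inr i => .inl ⟨.inr ⟨i.1, by have := i.2; omega⟩, by
          intro hc
          have h2 := Sum.inr_injective hc
          have h3 := congrArg (fun s => (Subtype.val s : Fin n).val) h2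
          simp at h3
          have := i.2
          omega⟩
    left_inv := by
      rintro (⟨e1, hne⟩ | b)
      · rcases e1 with ⟨j, b⟩ | ⟨i, hi⟩
        · simp [j.isLt]; rfl
        · exact congrArg Sum.inl (Subtype.ext (congrArg Sum.inr (Subtype.ext rfl)))
      · simp; rfl
    right_inv := by
      rintro (⟨j, b⟩ | ⟨i, hi⟩)
      · by_cases h : j.val < k
        · simp [h]; rfl
        · have hjk : j.val = k := by omega
          simp only [dif_neg h]
          erw [dif_neg h]
          exact congrArg Sum.inl (Prod.ext (Fin.ext hjk.symm) rfl :
            ((⟨k, by omega⟩ : Fin (k+1)), b) = (j, b))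
      · exact congrArg Sum.inr (Subtype.ext rfl) }
  ends := by
    rintro (⟨e1, hne⟩ | b)
    · rcases e1 with ⟨j, b⟩ | ⟨i, hi⟩
      · cases b
        · exact Or.inl ⟨rfl, rfl⟩
        · exact Or.inl ⟨rfl, rfl⟩
      · exact Or.inl ⟨rfl, rfl⟩
    · cases b
      · exact Or.inl ⟨rfl, rfl⟩
      · exact Or.inl ⟨rfl, rfl⟩

theorem refines_Bsub (n : ℕ) : ∀ k, k ≤ n →
    ∃ (ι : (banana n).V → (Bsub n k).V) (p : (Bsub n k).E → Option (banana n).E),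
      Refines (banana n) (Bsub n k) ι p := by
  intro k
  induction k with
  | zero =>
    intro _
    exact ⟨_, _, Refines.iso (Refines.refl (banana n)) (bsubIso0 n)⟩
  | succ k ih =>
    intro hk1
    obtain ⟨ι, p, href⟩ := ih (by omega)
    exact ⟨_, _, Refines.iso
      (Refines.subdiv href (Sum.inr ⟨⟨k, by omega⟩, le_refl k⟩))
      (bsubIsoStep n k (by omega))⟩

end Aux5
section Aux6
open MGraph

theorem sum_single_aux {α : Type} [Fintype α] (a : α) (f : α → ℕ)
    (h0 : ∀ b, b ≠ a → f b = 0) : ∑ x : α, f x = f a :=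
  Finset.sum_eq_single a (fun b _ hb => h0 b hb) (fun h => absurd (Finset.mem_univ _) h)

/-- The star tree with `n` leaves. -/
def starT (n : ℕ) : MGraph where
  V := Unit ⊕ Fin n
  E := Fin n
  fst := fun _ => .inl ()
  snd := fun i => .inr i

theorem starT_isTree (n : ℕ) : (starT n).IsTree := by
  constructor
  · refine ⟨⟨.inl ()⟩, fun x y => ?_⟩
    have hc : ∀ z : (starT n).V, Relation.ReflTransGen (starT n).Adj (Sum.inl ()) z := by
      rintro (⟨⟩ | i)
      · exact .refl
      · exact .single ⟨i, Or.inl ⟨rfl, rfl⟩⟩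
    have hc' : ∀ z : (starT n).V, Relation.ReflTransGen (starT n).Adj z (Sum.inl ()) := by
      rintro (⟨⟩ | i)
      · exact .refl
      · exact .single ⟨i, Or.inr ⟨rfl, rfl⟩⟩
    exact (hc' x).trans (hc y)
  · show Fintype.card (Unit ⊕ Fin n) = Fintype.card (Fin n) + 1; simp [add_comm]

theorem bsubnn_loopless (n : ℕ) : (Bsub n n).Loopless := by
  rintro (⟨j, b⟩ | ⟨i, hi⟩)
  · cases b <;> simp [Bsub]
  · exact absurd i.isLt (by omega)

instance bsub_empty (n : ℕ) : IsEmpty {i : Fin n // n ≤ i.val} :=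
  ⟨fun i => absurd i.1.isLt (by have := i.2; omega)⟩

def bsubFV (n : ℕ) : (Bsub n n).V → (starT n).V :=
  Sum.elim (fun _ => Sum.inl ()) (fun j => Sum.inr j)

def bsubFE (n : ℕ) : (Bsub n n).E → (starT n).E :=
  Sum.elim (fun p => p.1) (fun i => absurd i.1.isLt (by have := i.2; omega))

def bsubM (n : ℕ) : (Bsub n n).V → ℕ :=
  Sum.elim (fun _ => 1) (fun _ => 2)

def bsubHarm (n : ℕ) : FinHarm (Bsub n n) (starT n) where
  fV := bsubFV n
  fE := bsubFE n
  r := fun _ => 1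
  r_pos := fun _ => one_pos
  ends := by
    rintro (⟨j, b⟩ | ⟨i, hi⟩)
    · cases b
      · exact Or.inl ⟨rfl, rfl⟩
      · exact Or.inr ⟨rfl, rfl⟩
    · exact absurd i.isLt (by omega)
  m := bsubM n
  m_pos := by rintro (b | j) <;> simp [bsubM]
  harm := by
    rintro (b | j) e' hinc
    · show bsubM n (Sum.inl b) = ∑ e ∈ Finset.univ.filter
        (fun e : (Fin n × Bool) ⊕ {i : Fin n // n ≤ i.val} =>
          (Bsub n n).Inc e (Sum.inl b) ∧ bsubFE n e = e'), 1
      rw [Finset.sum_filter, Fintype.sum_sum_type, Fintype.sum_prod_type]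
      simp only [Fintype.sum_bool]
      cases b <;>
        · simp [bsubM, bsubFE, MGraph.Inc, Bsub, -Finset.sum_boole, Sum.elim]
          refine Eq.trans ?_ (sum_single_aux e' _ (fun b hb => by simp [hb])).symm
          simp
    · have he' : e' = j := by
        rcases hinc with h | h
        · exact absurd h (by simp [starT, bsubFV])
        · have h2 : (Sum.inr e' : Unit ⊕ Fin n) = Sum.inr j := h
          exact Sum.inr_injective h2
      subst he'
      show bsubM n (Sum.inr e') = ∑ e ∈ Finset.univ.filter
        (fun e : (Fin n × Bool) ⊕ {i : Fin n // n ≤ i.val} =>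
          (Bsub n n).Inc e (Sum.inr e') ∧ bsubFE n e = e'), 1
      rw [Finset.sum_filter, Fintype.sum_sum_type, Fintype.sum_prod_type]
      simp only [Fintype.sum_bool]
      simp [bsubM, bsubFE, MGraph.Inc, Bsub, -Finset.sum_boole, Finset.sum_add_distrib, Sum.elim]
      have key2 : ∀ x : Fin n, (@Eq (Bool ⊕ Fin n) (Sum.inr x) (Sum.inr e') ∧ @Eq (starT n).E x e') ↔ x = e' :=
        fun x => ⟨fun h => h.2, fun h => ⟨h ▸ rfl, h⟩⟩
      simp [key2]
      have hs : ∀ (p : Fin n → Prop) (inst : DecidablePred p), (∀ x, p x ↔ x = e') →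
          (@Finset.filter _ p inst Finset.univ).card = 1 :=
        fun p inst hp => Finset.card_eq_one.mpr ⟨e', Finset.ext fun x => by simp [hp]; exact Finset.mem_singleton.symm⟩
      rw [hs _ _ (fun x => Iff.rfl)]

theorem bsubHarm_deg (n : ℕ) : (bsubHarm n).IsDegree 2 := by
  constructor
  · rintro (⟨⟩ | j)
    · show (∑ v ∈ @Finset.filter _
        (fun v : Bool ⊕ Fin n => Sum.elim (fun _ => Sum.inl ()) (fun j => Sum.inr j) v =
          (Sum.inl () : Unit ⊕ Fin n)) (fun _ => Classical.propDecidable _) Finset.univ,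
          Sum.elim (fun _ => 1) (fun _ => 2) v) = 2
      rw [Finset.sum_filter, Fintype.sum_sum_type]
      simp only [Fintype.sum_bool]
      simp [bsubFV, bsubM]
    · show (∑ v ∈ @Finset.filter _
        (fun v : Bool ⊕ Fin n => Sum.elim (fun _ => Sum.inl ()) (fun j => Sum.inr j) v =
          (Sum.inr j : Unit ⊕ Fin n)) (fun _ => Classical.propDecidable _) Finset.univ,
          Sum.elim (fun _ => 1) (fun _ => 2) v) = 2
      rw [Finset.sum_filter, Fintype.sum_sum_type]
      simp only [Fintype.sum_bool]
      simp [bsubFV, bsubM, -Finset.sum_boole]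
  · intro e'
    show (∑ e ∈ Finset.univ.filter
        (fun e : (Fin n × Bool) ⊕ {i : Fin n // n ≤ i.val} =>
          bsubFE n e = e'), 1) = 2
    rw [Finset.sum_filter, Fintype.sum_sum_type, Fintype.sum_prod_type]
    simp only [Fintype.sum_bool]
    simp [bsubFE, -Finset.sum_boole, Finset.sum_add_distrib, Sum.elim]
    refine Eq.trans (congrArg₂ (· + ·)
      (sum_single_aux e' _ (fun b hb => by simp [hb]))
      (sum_single_aux e' _ (fun b hb => by simp [hb]))) ?_
    simp

theorem sgon_mem (n : ℕ) : 2 ∈ sgonSet (banana n) := by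
  obtain ⟨ι, p, href⟩ := refines_Bsub n n le_rfl
  exact ⟨Bsub n n, starT n, ι, p, href, bsubnn_loopless n, starT_isTree n,
    bsubHarm n, bsubHarm_deg n⟩

end Aux6

/-- Example "examplegon1": for `n ≥ 2`, the minimal degree
of a finite harmonic morphism from the banana graph `B_n` itself to a tree is
`n`, while the stable gonality of `B_n` equals `2`. -/
theorem banana_gonality (n : ℕ) (hn : 2 ≤ n) :
    IsLeast {d : ℕ | ∃ T : MGraph, T.IsTree ∧
      ∃ φ : FinHarm (banana n) T, φ.IsDegree d} n ∧
    IsLeast (sgonSet (banana n)) 2 := by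
  exact ⟨banana_part1 n hn, sgon_mem n, fun d hd => sgon_lower n hn d hd⟩
end
end

section
/- For every n ≥ 1, the complete bipartite graph K_{n,n} satisfies sgon(K_{n,n}) ≤ n: the map collapsing each side of the bipartition appropriately onto the star graph with one central vertex and n emanating edges is a finite harmonic morphism of degree n. -/
/-!  Finite multigraphs, harmonic morphisms, refinements and stable gonality,
     following Cornelissen–Kato–Kool, "A combinatorial Li–Yau inequality and
     rational points on curves".  -/

attribute [local instance] Classical.propDecidable

noncomputable section

open MGraph

namespace MGraph

/-- The complete bipartite graph `K_{n,n}`. -/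
def completeBipartite (n : ℕ) : MGraph where
  V := Bool × Fin n
  E := Fin n × Fin n
  fst := fun e => (false, e.1)
  snd := fun e => (true, e.2)

/-- The star graph with one central vertex (`none`) and `n` emanating
edges. -/
def star (n : ℕ) : MGraph where
  V := Option (Fin n)
  E := Fin n
  fst := fun _ => none
  snd := fun e => some e

end MGraph

namespace KnnProof

/-- The collapsing morphism `K_{n,n} → star n`. -/
def theMorphism (n : ℕ) : FinHarm (completeBipartite n) (MGraph.star n) where
  fV := fun v => if v.1 then some v.2 else none
  fE := fun e => e.2
  r := fun _ => 1
  r_pos := fun _ => Nat.one_pos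
  ends := fun e => Or.inl ⟨rfl, rfl⟩
  m := fun v => if v.1 then n else 1
  m_pos := fun v => by
    cases hv : v.1
    · simp [hv]
    · simpa [hv] using v.2.pos
  harm := by
    rintro ⟨b, i⟩ e' he'
    cases b
    · -- v = (false, i): exactly one edge (i, e') lies over e' at v
      show (1 : ℕ) = _
      simp only [MGraph.Inc, completeBipartite, Prod.mk.injEq]
      simp [← Finset.filter_and, Prod.ext_iff, Finset.sum_filter, Fintype.sum_prod_type]
      symm
      rw [Finset.card_eq_one]
      exact ⟨(i, e'), by ext ⟨a, b⟩; simp [Prod.ext_iff]; exact ⟨fun h => h.2, fun h => ⟨Finset.mem_univ _, h⟩⟩⟩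
    · -- v = (true, i): incidence forces e' = i, and all n edges (·, i) lie over it
      show (n : ℕ) = _
      have he'i : e' = i := by
        rcases he' with h | h
        · exact absurd h (by simp [MGraph.star])
        · exact Option.some.inj (by simpa [MGraph.star] using h)
      subst he'i
      simp only [MGraph.Inc, completeBipartite, Prod.mk.injEq]
      simp [← Finset.filter_and, Prod.ext_iff, Finset.sum_filter, Fintype.sum_prod_type]
      symm
      rw [Finset.card_filter]
      show (∑ i : Fin n × Fin n, _) = n
      rw [Fintype.sum_prod_type]
      simp
      convert mul_one n using 2
      exact Finset.card_eq_one.2 ⟨e', Finset.eq_singleton_iff_unique_mem.2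
        ⟨Finset.mem_filter.2 ⟨Finset.mem_univ _, rfl, rfl⟩, fun x hx => (Finset.mem_filter.1 hx).2.1⟩⟩

lemma morphism_degree (n : ℕ) : (theMorphism n).IsDegree n := by
  constructor
  · intro v'
    cases v' with
    | none =>
      have hset : Finset.univ.filter
            (fun v : (completeBipartite n).V => (theMorphism n).fV v = none)
          = Finset.univ.map ⟨fun i : Fin n => ((false : Bool), i), fun a b h => by
              simpa using congrArg Prod.snd h⟩ := by
        ext ⟨b, i⟩
        erw [Finset.mem_filter, Finset.mem_map]
        cases b <;>
          simp [theMorphism, MGraph.star, Function.Embedding.coeFn_mk,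
            Prod.ext_iff, Option.some.injEq]
        · exact ⟨fun _ => ⟨i, rfl⟩, fun _ => Finset.mem_univ _⟩
        · exact fun x h => Bool.false_ne_true (congrArg Prod.fst h)
      rw [Finset.sum_congr hset fun _ _ => rfl]
      erw [Finset.sum_map]
      simp [theMorphism]
    | some j =>
      have hset : Finset.univ.filter
            (fun v : (completeBipartite n).V => (theMorphism n).fV v = some j)
          = {((true : Bool), j)} := by
        ext ⟨b, i⟩
        erw [Finset.mem_filter, Finset.mem_singleton]
        cases b <;>
          simp [theMorphism, MGraph.star, Function.Embedding.coeFn_mk,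
            Prod.ext_iff, Option.some.injEq]
        · exact fun h => Bool.false_ne_true (congrArg Prod.fst h)
        · exact ⟨fun h => by rw [h.2], fun h => ⟨Finset.mem_univ _, congrArg Prod.snd h⟩⟩
      rw [Finset.sum_congr hset fun _ _ => rfl]
      erw [Finset.sum_singleton]
      simp [theMorphism]
  · intro e'
    have hset : Finset.univ.filter
          (fun e : (completeBipartite n).E => (theMorphism n).fE e = e')
        = Finset.univ.map ⟨fun a : Fin n => (a, e'), fun a b h => by
            simpa using congrArg Prod.fst h⟩ := by
      ext ⟨a, b⟩
      erw [Finset.mem_filter, Finset.mem_map]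
      simp only [Finset.mem_univ, true_and,
        Function.Embedding.coeFn_mk, theMorphism]
      constructor
      · intro hb; obtain ⟨-, hb⟩ := hb; subst hb; exact ⟨a, rfl⟩
      · rintro ⟨a1, h⟩; exact ⟨Finset.mem_univ _, (congrArg Prod.snd h).symm⟩
    rw [Finset.sum_congr hset fun _ _ => rfl]
    erw [Finset.sum_map]
    simp [theMorphism]

lemma star_isTree (n : ℕ) : (MGraph.star n).IsTree := by
  constructor
  · constructor
    · exact ⟨none⟩
    · intro x y
      have key : ∀ z : Option (Fin n), Relation.ReflTransGen (MGraph.star n).Adj none z := by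
        rintro (_ | j)
        · exact Relation.ReflTransGen.refl
        · exact Relation.ReflTransGen.single ⟨j, Or.inl ⟨rfl, rfl⟩⟩
      have key2 : ∀ z : Option (Fin n), Relation.ReflTransGen (MGraph.star n).Adj z none := by
        rintro (_ | j)
        · exact Relation.ReflTransGen.refl
        · exact Relation.ReflTransGen.single ⟨j, Or.inr ⟨rfl, rfl⟩⟩
      exact (key2 x).trans (key y)
  · simp [MGraph.star]
    exact Fintype.card_option

lemma knn_loopless (n : ℕ) : (completeBipartite n).Loopless := by
  intro e
  simp [completeBipartite]

end KnnProof

/-- Example "ASM": `sgon(K_{n,n}) ≤ n`; the map collapsing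
one side of the bipartition onto the center of the star with `n` edges and the
other side onto its leaves is a finite harmonic morphism of degree `n`. -/
theorem complete_bipartite_stable_gonality_le (n : ℕ) (hn : 1 ≤ n) :
    (∃ φ : FinHarm (completeBipartite n) (star n),
      (∀ i : Fin n, φ.fV (false, i) = none) ∧
      (∀ j : Fin n, φ.fV (true, j) = some j) ∧
      (∀ e : Fin n × Fin n, φ.fE e = e.2) ∧
      φ.IsDegree n) ∧
    ∃ d ∈ sgonSet (completeBipartite n), d ≤ n := by
  refine ⟨⟨KnnProof.theMorphism n, fun i => rfl, fun j => rfl, fun e => rfl,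
    KnnProof.morphism_degree n⟩, n, ?_, le_rfl⟩
  exact ⟨completeBipartite n, MGraph.star n, id, (fun e => some e), Refines.refl _,
    KnnProof.knn_loopless n, KnnProof.star_isTree n,
    KnnProof.theMorphism n, KnnProof.morphism_degree n⟩
end
end
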